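/- Let x, z be grid states with |x \ (x∩z)| = 4 and let ψ ∈ π(x,z) be a domain admitting a decomposition ψ = r₁ * r₂ into two rectangles (with any intermediate state), not both long. Then ψ admits exactly two such decompositions, and the two decompositions have the same degree, where the degree of a decomposition is T(r₁) + T(r₂). -/

import Mathlib

/-- A (possibly long) rectangle on the `n × n` grid torus, described in the universal
cover `ℝ²` (with the grid torus `= ℝ²/(nℤ)²`) by the box `[A, B) × [C, D)`:
columns `[A, B)`, rows `[C, D)`. -/
structure CRect where
  A : ℤ
  B : ℤ
  C : ℤ
  D : ℤ
deriving DecidableEq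

/-- The multiplicity of the projection of the box to the torus at the square `p`
(column `p.1`, row `p.2`). -/
noncomputable def CRect.mult (n : ℕ) (R : CRect) (p : ZMod n × ZMod n) : ℤ :=
  ((((Finset.Ico R.A R.B).filter (fun u : ℤ => (u : ZMod n) = p.1)).card : ℤ) *
   (((Finset.Ico R.C R.D).filter (fun v : ℤ => (v : ZMod n) = p.2)).card : ℤ))

/-- The grid state obtained from `x` by moving the two points of `x` at the SW and NE
corners of `R` to the other two corners of `R`. -/
def CRect.target (n : ℕ) (R : CRect) (x : Equiv.Perm (ZMod n)) : Equiv.Perm (ZMod n) :=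
  x.trans (Equiv.swap ((R.C : ZMod n)) ((R.D : ZMod n)))

/-- `R` connects the grid state `x` to the grid state `y`: the SW and NE corners of `R`
are points of `x`, the other two corners are points of `y`, and `x`, `y` agree elsewhere. -/
def CRect.Connects (n : ℕ) (R : CRect) (x y : Equiv.Perm (ZMod n)) : Prop :=
  ((R.A : ZMod n) ≠ (R.B : ZMod n)) ∧
  x ((R.A : ZMod n)) = (R.C : ZMod n) ∧
  x ((R.B : ZMod n)) = (R.D : ZMod n) ∧
  y = R.target n x

/-- An ordinary (embedded) rectangle. -/
def CRect.IsOrd (n : ℕ) (R : CRect) : Prop :=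
  0 < R.B - R.A ∧ R.B - R.A < (n : ℤ) ∧ 0 < R.D - R.C ∧ R.D - R.C < (n : ℤ)

/-- A long rectangle: it has width one and wraps once around the torus, so it has
local multiplicity `2` somewhere and local multiplicity `1` somewhere. -/
def CRect.IsLong (n : ℕ) (R : CRect) : Prop :=
  (R.B - R.A = 1 ∧ (n : ℤ) < R.D - R.C ∧ R.D - R.C < 2 * (n : ℤ)) ∨
  (R.D - R.C = 1 ∧ (n : ℤ) < R.B - R.A ∧ R.B - R.A < 2 * (n : ℤ))

/-- A normalized choice of lift: the SW corner lies in the fundamental domain, so each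
rectangle on the torus is described by exactly one normalized box. -/
def CRect.Normalized (n : ℕ) (R : CRect) : Prop :=
  0 ≤ R.A ∧ R.A < (n : ℤ) ∧ 0 ≤ R.C ∧ R.C < (n : ℤ)

/-- `R` is a (possibly long) rectangle from the grid state `x` to the grid state `y`. -/
def CRect.IsRect (n : ℕ) (R : CRect) (x y : Equiv.Perm (ZMod n)) : Prop :=
  R.Normalized n ∧ (R.IsOrd n ∨ R.IsLong n) ∧ R.Connects n x y

/-- The number of points of the grid state `x` in the interior of `R`
(counted with multiplicity). -/
noncomputable def CRect.intCount (n : ℕ) (R : CRect) (x : Equiv.Perm (ZMod n)) : ℕ :=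
  (((Finset.Ioo R.A R.B) ×ˢ (Finset.Ioo R.C R.D)).filter
    (fun q : ℤ × ℤ => x ((q.1 : ZMod n)) = (q.2 : ZMod n))).card

open Classical in
/-- `T(r) = 1` if `r` is long, and `T(r) = |Int(r) ∩ x|` otherwise. -/
noncomputable def CRect.T (n : ℕ) (R : CRect) (x : Equiv.Perm (ZMod n)) : ℕ :=
  if R.IsLong n then 1 else R.intCount n x

/-- A decomposition `ψ = r₁ * r₂` of the domain `ψ ∈ π(x, z)` as a juxtaposition of two
(possibly long) rectangles, not both long, through an intermediate grid state `y`,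
with multiplicities adding pointwise. -/
structure Decomp (n : ℕ) (ψ : ZMod n × ZMod n → ℤ) (x z : Equiv.Perm (ZMod n)) where
  y : Equiv.Perm (ZMod n)
  R₁ : CRect
  R₂ : CRect
  h₁ : R₁.IsRect n x y
  h₂ : R₂.IsRect n y z
  notboth : ¬(R₁.IsLong n ∧ R₂.IsLong n)
  hsum : ∀ p, ψ p = R₁.mult n p + R₂.mult n p

/-- The degree `T(r₁) + T(r₂)` of a decomposition. -/
noncomputable def Decomp.deg {n : ℕ} {ψ : ZMod n × ZMod n → ℤ} {x z : Equiv.Perm (ZMod n)}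
    (d : Decomp n ψ x z) : ℕ :=
  d.R₁.T n x + d.R₂.T n d.y

/-!
The multiplicity of a rectangle is the product of its column profile and its row profile (how
often its lift covers each residue class). Since `|x \ z| = 4` forces the four corner columns,
and the four corner rows, of a decomposition to be distinct, the jump of `ψ` across the vertical
line through the SW corner of `r₁` is the row profile of `r₁`, and the jump across the horizontal
line through it is its column profile; the profiles and the SW corner determine the normalized
lift. The SW corner of `r₁` is one of the four points of `x` moved in `z`. Two of the choices give
`d` and `d` with its rectangles in the opposite order, and the other two would make a jump both
positive and non-positive.

For the degree, swapping two points of `x` changes the interior count of a rectangle by a product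
of two differences of its interior profiles. For the two orders of the rectangles these are
linking numbers of their corner pairs, which are antisymmetric, so the changes agree; a long
rectangle has width or height one, which makes the change vanish.
-/

open Finset

def fiberCard (n : ℕ) (s : Finset ℤ) (t : ZMod n) : ℕ :=
  #(s.filter fun u : ℤ => (u : ZMod n) = t)

section FiberCard

variable {n : ℕ}

lemma fiberCard_insert {s : Finset ℤ} {a : ℤ} (ha : a ∉ s) (t : ZMod n) :
    (fiberCard n (insert a s) t : ℤ) = fiberCard n s t + if (a : ZMod n) = t then 1 else 0 := by
  unfold fiberCard
  rw [filter_insert]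
  split_ifs <;> simp [card_insert_of_notMem, ha]

lemma fiberCard_pos {s : Finset ℤ} {a : ℤ} (ha : a ∈ s) : 0 < fiberCard n s a :=
  card_pos.mpr ⟨a, mem_filter.mpr ⟨ha, rfl⟩⟩

lemma sum_fiberCard [NeZero n] (s : Finset ℤ) : ∑ t, fiberCard n s t = #s :=
  (card_eq_sum_card_fiberwise fun _ _ => mem_univ _).symm

lemma fiberCard_Ico_sub_fiberCard_Ico_sub_one {I J : ℤ} (hIJ : I ≤ J) (t : ZMod n) :
    (fiberCard n (Ico I J) t : ℤ) - fiberCard n (Ico I J) (t - 1) =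
      (if (I : ZMod n) = t then 1 else 0) - (if (J : ZMod n) = t then 1 else 0) := by
  induction J, hIJ using Int.leInduction with
  | base => simp [fiberCard]
  | succ J hIJ ih =>
    rw [← insert_Ico_right_eq_Ico_add_one hIJ, fiberCard_insert (by simp),
      fiberCard_insert (by simp)]
    have hJ : ((J : ZMod n) = t - 1) ↔ (((J + 1 : ℤ) : ZMod n) = t) := by
      push_cast; exact eq_sub_iff_add_eq
    simp only [← hJ]
    linear_combination ih

lemma fiberCard_Ico_sub_fiberCard_Ico {I J K L : ℤ} (hIJ : I ≤ J) (hKL : K ≤ L) :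
    (fiberCard n (Ico I J) L : ℤ) - fiberCard n (Ico I J) K =
      fiberCard n (Ioc K L) I - fiberCard n (Ioc K L) J := by
  induction L, hKL using Int.leInduction with
  | base => simp [fiberCard]
  | succ L hKL ih =>
    have step := fiberCard_Ico_sub_fiberCard_Ico_sub_one (n := n) hIJ ((L + 1 : ℤ) : ZMod n)
    rw [show ((L + 1 : ℤ) : ZMod n) - 1 = L by push_cast; ring] at step
    rw [← insert_Ioc_right_eq_Ioc_add_one hKL, fiberCard_insert (by simp),
      fiberCard_insert (by simp)]
    simp only [eq_comm (a := ((L + 1 : ℤ) : ZMod n))]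
    linear_combination ih + step

-- Antisymmetry of the linking number of two chords of the circle `ZMod n`.
lemma fiberCard_Ioo_sub_fiberCard_Ioo {I J K L : ℤ} (hIJ : I < J) (hKL : K < L)
    (hIK : (I : ZMod n) ≠ K) (hJL : (J : ZMod n) ≠ L) :
    (fiberCard n (Ioo I J) L : ℤ) - fiberCard n (Ioo I J) K =
      fiberCard n (Ioo K L) I - fiberCard n (Ioo K L) J := by
  have h := fiberCard_Ico_sub_fiberCard_Ico (n := n) hIJ.le hKL.le
  rw [← Ioo_insert_left hIJ, ← Ioo_insert_right hKL, fiberCard_insert (by simp),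
    fiberCard_insert (by simp), fiberCard_insert (by simp), fiberCard_insert (by simp)] at h
  simp only [eq_comm (a := ((L : ℤ) : ZMod n)), hIK, hJL, if_false, add_zero] at h
  linear_combination h

lemma fiberCard_Ioo_add_one {I J : ℤ} (hIJ : I < J) {t : ZMod n} (hI : (I : ZMod n) ≠ t)
    (hJ : (J : ZMod n) ≠ t + 1) : fiberCard n (Ioo I J) (t + 1) = fiberCard n (Ioo I J) t := by
  have h := fiberCard_Ico_sub_fiberCard_Ico_sub_one (n := n) hIJ (t + 1)
  rw [Ico_add_one_left_eq_Ioo, add_sub_cancel_right, if_neg hJ, if_neg (by push_cast; simpa)] at h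
  omega

end FiberCard

namespace CRect

variable {n : ℕ}

lemma mult_eq (R : CRect) (p : ZMod n × ZMod n) :
    R.mult n p = fiberCard n (Ico R.A R.B) p.1 * fiberCard n (Ico R.C R.D) p.2 := rfl

lemma mult_sub_mult_sub_one_fst (R : CRect) (hAB : R.A ≤ R.B) (t s : ZMod n) :
    R.mult n (t, s) - R.mult n (t - 1, s) =
      ((if (R.A : ZMod n) = t then 1 else 0) - if (R.B : ZMod n) = t then 1 else 0) *
        fiberCard n (Ico R.C R.D) s := by
  rw [mult_eq, mult_eq, ← fiberCard_Ico_sub_fiberCard_Ico_sub_one hAB]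
  ring

lemma mult_sub_mult_sub_one_snd (R : CRect) (hCD : R.C ≤ R.D) (t s : ZMod n) :
    R.mult n (t, s) - R.mult n (t, s - 1) =
      ((if (R.C : ZMod n) = s then 1 else 0) - if (R.D : ZMod n) = s then 1 else 0) *
        fiberCard n (Ico R.A R.B) t := by
  rw [mult_eq, mult_eq, ← fiberCard_Ico_sub_fiberCard_Ico_sub_one hCD]
  ring

lemma intCount_eq_sum [NeZero n] (R : CRect) (w : Equiv.Perm (ZMod n)) :
    R.intCount n w = ∑ t, fiberCard n (Ioo R.A R.B) t * fiberCard n (Ioo R.C R.D) (w t) := by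
  rw [intCount, card_eq_sum_card_fiberwise (f := fun q : ℤ × ℤ => (q.1 : ZMod n))
    (t := univ) fun _ _ => mem_univ _]
  refine sum_congr rfl fun t _ => ?_
  rw [fiberCard, fiberCard, ← card_product, filter_filter]
  congr 1
  ext ⟨u, v⟩
  simp only [mem_filter, mem_product]
  constructor
  · rintro ⟨⟨hu, hv⟩, hw, rfl⟩; exact ⟨⟨hu, rfl⟩, hv, hw.symm⟩
  · rintro ⟨⟨hu, rfl⟩, hv, hw⟩; exact ⟨⟨hu, hv⟩, hw.symm, rfl⟩

lemma intCount_trans_swap_sub [NeZero n] (R : CRect) (x : Equiv.Perm (ZMod n)) {p q : ZMod n}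
    (hpq : p ≠ q) :
    (R.intCount n (x.trans (Equiv.swap (x p) (x q))) : ℤ) - R.intCount n x =
      ((fiberCard n (Ioo R.A R.B) p : ℤ) - fiberCard n (Ioo R.A R.B) q) *
        ((fiberCard n (Ioo R.C R.D) (x q) : ℤ) - fiberCard n (Ioo R.C R.D) (x p)) := by
  rw [intCount_eq_sum, intCount_eq_sum]
  push_cast
  rw [← sum_sub_distrib, Fintype.sum_eq_add p q hpq]
  · simp only [Equiv.trans_apply, Equiv.swap_apply_left, Equiv.swap_apply_right]
    ring
  · rintro t ⟨hp, hq⟩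
    simp [Equiv.swap_apply_of_ne_of_ne (x.injective.ne hp) (x.injective.ne hq)]

lemma lt_and_lt_of_isOrd_or_isLong {R : CRect} (hR : R.IsOrd n ∨ R.IsLong n) :
    R.A < R.B ∧ R.C < R.D := by
  unfold IsOrd IsLong at hR
  omega

lemma IsLong.eq_add_one {R : CRect} (hR : R.IsLong n) : R.B = R.A + 1 ∨ R.D = R.C + 1 := by
  unfold IsLong at hR
  omega

end CRect

lemma List.nodup_four_iff {α : Type*} {a b c d : α} :
    [a, b, c, d].Nodup ↔ a ≠ b ∧ a ≠ c ∧ a ≠ d ∧ b ≠ c ∧ b ≠ d ∧ c ≠ d := by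
  simp only [List.nodup_cons, List.mem_cons, List.not_mem_nil, List.nodup_nil, not_or]
  tauto

lemma Int.eq_of_intCast_zmod_eq {n : ℕ} {a b : ℤ} (ha : 0 ≤ a) (han : a < n) (hb : 0 ≤ b)
    (hbn : b < n) (h : (a : ZMod n) = b) : a = b := by
  rwa [ZMod.intCast_eq_intCast_iff', Int.emod_eq_of_lt ha han, Int.emod_eq_of_lt hb hbn] at h

attribute [ext] CRect Decomp

namespace Decomp

variable {n : ℕ} {ψ : ZMod n × ZMod n → ℤ} {x z : Equiv.Perm (ZMod n)}

lemma apply_R₁_A (g : Decomp n ψ x z) : x g.R₁.A = g.R₁.C := g.h₁.2.2.2.1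

lemma apply_R₁_B (g : Decomp n ψ x z) : x g.R₁.B = g.R₁.D := g.h₁.2.2.2.2.1

lemma y_eq (g : Decomp n ψ x z) :
    g.y = x.trans (Equiv.swap (g.R₁.C : ZMod n) (g.R₁.D : ZMod n)) := g.h₁.2.2.2.2.2

lemma z_apply (g : Decomp n ψ x z) (i : ZMod n) :
    z i = Equiv.swap (g.R₂.C : ZMod n) g.R₂.D (Equiv.swap (g.R₁.C : ZMod n) g.R₁.D (x i)) := by
  rw [congrArg (· i) g.h₂.2.2.2.2.2, CRect.target, g.y_eq]
  rfl

lemma sub_sub_one_fst (g : Decomp n ψ x z) (t s : ZMod n) :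
    ψ (t, s) - ψ (t - 1, s) =
      ((if (g.R₁.A : ZMod n) = t then 1 else 0) - if (g.R₁.B : ZMod n) = t then 1 else 0) *
          fiberCard n (Ico g.R₁.C g.R₁.D) s +
        ((if (g.R₂.A : ZMod n) = t then 1 else 0) - if (g.R₂.B : ZMod n) = t then 1 else 0) *
          fiberCard n (Ico g.R₂.C g.R₂.D) s := by
  rw [g.hsum, g.hsum,
    ← CRect.mult_sub_mult_sub_one_fst _ (CRect.lt_and_lt_of_isOrd_or_isLong g.h₁.2.1).1.le,
    ← CRect.mult_sub_mult_sub_one_fst _ (CRect.lt_and_lt_of_isOrd_or_isLong g.h₂.2.1).1.le]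
  ring

lemma sub_sub_one_snd (g : Decomp n ψ x z) (t s : ZMod n) :
    ψ (t, s) - ψ (t, s - 1) =
      ((if (g.R₁.C : ZMod n) = s then 1 else 0) - if (g.R₁.D : ZMod n) = s then 1 else 0) *
          fiberCard n (Ico g.R₁.A g.R₁.B) t +
        ((if (g.R₂.C : ZMod n) = s then 1 else 0) - if (g.R₂.D : ZMod n) = s then 1 else 0) *
          fiberCard n (Ico g.R₂.A g.R₂.B) t := by
  rw [g.hsum, g.hsum,
    ← CRect.mult_sub_mult_sub_one_snd _ (CRect.lt_and_lt_of_isOrd_or_isLong g.h₁.2.1).2.le,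
    ← CRect.mult_sub_mult_sub_one_snd _ (CRect.lt_and_lt_of_isOrd_or_isLong g.h₂.2.1).2.le]
  ring

variable [NeZero n]

lemma rows_nodup (g : Decomp n ψ x z) (h4 : #{i | x i ≠ z i} = 4) :
    [(g.R₁.C : ZMod n), g.R₁.D, g.R₂.C, g.R₂.D].Nodup := by
  set rows := [(g.R₁.C : ZMod n), g.R₁.D, g.R₂.C, g.R₂.D]
  have hmoved : (univ.filter fun i : ZMod n => x i ≠ z i) ⊆ rows.toFinset.image x.symm := by
    intro i hi
    rw [mem_filter] at hi
    refine mem_image.mpr ⟨x i, ?_, x.symm_apply_apply i⟩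
    by_contra hx
    simp only [List.mem_toFinset, rows, List.mem_cons, List.not_mem_nil, not_or] at hx
    apply hi.2
    rw [g.z_apply, Equiv.swap_apply_of_ne_of_ne hx.1 hx.2.1,
      Equiv.swap_apply_of_ne_of_ne hx.2.2.1 hx.2.2.2.1]
  have hcard : #rows.toFinset = rows.length :=
    le_antisymm (List.toFinset_card_le rows)
      (h4.symm.trans_le ((card_le_card hmoved).trans card_image_le))
  exact Multiset.coe_nodup.mp (Multiset.toFinset_card_eq_card_iff_nodup.mp hcard)

lemma apply_R₂_A (g : Decomp n ψ x z) (h4 : #{i | x i ≠ z i} = 4) :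
    x g.R₂.A = g.R₂.C := by
  obtain ⟨-, h13, -, h23, -, -⟩ := List.nodup_four_iff.mp (g.rows_nodup h4)
  have h := g.h₂.2.2.2.1
  rw [g.y_eq, Equiv.trans_apply, Equiv.swap_apply_eq_iff,
    Equiv.swap_apply_of_ne_of_ne h13.symm h23.symm] at h
  exact h

lemma apply_R₂_B (g : Decomp n ψ x z) (h4 : #{i | x i ≠ z i} = 4) :
    x g.R₂.B = g.R₂.D := by
  obtain ⟨-, -, h14, -, h24, -⟩ := List.nodup_four_iff.mp (g.rows_nodup h4)
  have h := g.h₂.2.2.2.2.1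
  rw [g.y_eq, Equiv.trans_apply, Equiv.swap_apply_eq_iff,
    Equiv.swap_apply_of_ne_of_ne h14.symm h24.symm] at h
  exact h

lemma cols_nodup (g : Decomp n ψ x z) (h4 : #{i | x i ≠ z i} = 4) :
    [(g.R₁.A : ZMod n), g.R₁.B, g.R₂.A, g.R₂.B].Nodup := by
  refine List.Nodup.of_map x ?_
  simpa only [List.map_cons, List.map_nil, apply_R₁_A, apply_R₁_B, g.apply_R₂_A h4,
    g.apply_R₂_B h4] using g.rows_nodup h4

@[simps]
def flip (g : Decomp n ψ x z) (h4 : #{i | x i ≠ z i} = 4) : Decomp n ψ x z where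
  y := x.trans (Equiv.swap (g.R₂.C : ZMod n) g.R₂.D)
  R₁ := g.R₂
  R₂ := g.R₁
  h₁ := ⟨g.h₂.1, g.h₂.2.1, g.h₂.2.2.1, g.apply_R₂_A h4, g.apply_R₂_B h4, rfl⟩
  h₂ := by
    obtain ⟨-, h13, h14, h23, h24, -⟩ := List.nodup_four_iff.mp (g.rows_nodup h4)
    refine ⟨g.h₁.1, g.h₁.2.1, g.h₁.2.2.1, ?_, ?_, ?_⟩
    · rw [Equiv.trans_apply, apply_R₁_A, Equiv.swap_apply_of_ne_of_ne h13 h14]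
    · rw [Equiv.trans_apply, apply_R₁_B, Equiv.swap_apply_of_ne_of_ne h23 h24]
    · have hcomm := (Equiv.Perm.disjoint_swap_swap (g.rows_nodup h4)).commute.eq
      ext i
      rw [g.z_apply]
      exact (congrArg (· (x i)) hcomm).symm
  notboth h := g.notboth h.symm
  hsum p := (g.hsum p).trans (add_comm _ _)

lemma sub_sub_one_fst_R₁_A (g : Decomp n ψ x z) (h4 : #{i | x i ≠ z i} = 4) (s : ZMod n) :
    ψ (g.R₁.A, s) - ψ (g.R₁.A - 1, s) = fiberCard n (Ico g.R₁.C g.R₁.D) s := by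
  obtain ⟨h12, h13, h14, -, -, -⟩ := List.nodup_four_iff.mp (g.cols_nodup h4)
  rw [g.sub_sub_one_fst, if_pos rfl, if_neg h12.symm, if_neg h13.symm, if_neg h14.symm]
  ring

lemma sub_sub_one_snd_R₁_C (g : Decomp n ψ x z) (h4 : #{i | x i ≠ z i} = 4) (t : ZMod n) :
    ψ (t, g.R₁.C) - ψ (t, g.R₁.C - 1) = fiberCard n (Ico g.R₁.A g.R₁.B) t := by
  obtain ⟨h12, h13, h14, -, -, -⟩ := List.nodup_four_iff.mp (g.rows_nodup h4)
  rw [g.sub_sub_one_snd, if_pos rfl, if_neg h12.symm, if_neg h13.symm, if_neg h14.symm]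
  ring

lemma sub_sub_one_snd_R₁_D (g : Decomp n ψ x z) (h4 : #{i | x i ≠ z i} = 4) (t : ZMod n) :
    ψ (t, g.R₁.D) - ψ (t, g.R₁.D - 1) = -fiberCard n (Ico g.R₁.A g.R₁.B) t := by
  obtain ⟨h12, -, -, h23, h24, -⟩ := List.nodup_four_iff.mp (g.rows_nodup h4)
  rw [g.sub_sub_one_snd, if_pos rfl, if_neg h12, if_neg h23.symm, if_neg h24.symm]
  ring

lemma R₁_C_mem (e f : Decomp n ψ x z) (h4 : #{i | x i ≠ z i} = 4) :
    (e.R₁.C : ZMod n) = f.R₁.C ∨ (e.R₁.C : ZMod n) = f.R₁.D ∨ (e.R₁.C : ZMod n) = f.R₂.C ∨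
      (e.R₁.C : ZMod n) = f.R₂.D := by
  by_contra! h
  obtain ⟨h12, -, -, h23, h24, -⟩ := List.nodup_four_iff.mp (e.rows_nodup h4)
  have hz := (f.z_apply e.R₁.A).symm.trans (e.z_apply e.R₁.A)
  rw [apply_R₁_A, Equiv.swap_apply_of_ne_of_ne h.1 h.2.1,
    Equiv.swap_apply_of_ne_of_ne h.2.2.1 h.2.2.2, Equiv.swap_apply_left,
    Equiv.swap_apply_of_ne_of_ne h23 h24] at hz
  exact h12 hz

lemma R₁_eq_of_R₁_C_eq {e f : Decomp n ψ x z} (h4 : #{i | x i ≠ z i} = 4)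
    (hC : (e.R₁.C : ZMod n) = f.R₁.C) : e.R₁ = f.R₁ := by
  have hA : (e.R₁.A : ZMod n) = f.R₁.A := x.injective (by rw [apply_R₁_A, apply_R₁_A, hC])
  have hrows : fiberCard n (Ico e.R₁.C e.R₁.D) = fiberCard n (Ico f.R₁.C f.R₁.D) := by
    funext s
    have h := e.sub_sub_one_fst_R₁_A h4 s
    rw [hA, f.sub_sub_one_fst_R₁_A h4 s] at h
    exact_mod_cast h.symm
  have hcols : fiberCard n (Ico e.R₁.A e.R₁.B) = fiberCard n (Ico f.R₁.A f.R₁.B) := by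
    funext t
    have h := e.sub_sub_one_snd_R₁_C h4 t
    rw [hC, f.sub_sub_one_snd_R₁_C h4 t] at h
    exact_mod_cast h.symm
  have hheight := congrArg (fun c => ∑ s, c s) hrows
  have hwidth := congrArg (fun c => ∑ t, c t) hcols
  simp only [sum_fiberCard, Int.card_Ico] at hheight hwidth
  obtain ⟨heA, heA', heC, heC'⟩ := e.h₁.1
  obtain ⟨hfA, hfA', hfC, hfC'⟩ := f.h₁.1
  have := Int.eq_of_intCast_zmod_eq heA heA' hfA hfA' hA
  have := Int.eq_of_intCast_zmod_eq heC heC' hfC hfC' hC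
  have := CRect.lt_and_lt_of_isOrd_or_isLong e.h₁.2.1
  have := CRect.lt_and_lt_of_isOrd_or_isLong f.h₁.2.1
  ext <;> omega

lemma false_of_R₁_C_eq_R₁_D {e f : Decomp n ψ x z} (h4 : #{i | x i ≠ z i} = 4)
    (hCD : (e.R₁.C : ZMod n) = f.R₁.D) : False := by
  have h := e.sub_sub_one_snd_R₁_C h4 e.R₁.A
  rw [hCD, f.sub_sub_one_snd_R₁_D h4] at h
  have := fiberCard_pos (n := n) (left_mem_Ico.mpr (CRect.lt_and_lt_of_isOrd_or_isLong e.h₁.2.1).1)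
  omega

lemma eq_of_R₁_C_eq {e f : Decomp n ψ x z} (h4 : #{i | x i ≠ z i} = 4)
    (hC : (e.R₁.C : ZMod n) = f.R₁.C) : e = f := by
  have hR₁ := R₁_eq_of_R₁_C_eq h4 hC
  obtain ⟨-, h13, -, h23, -, -⟩ := List.nodup_four_iff.mp (e.rows_nodup h4)
  have hR₂ : e.R₂ = f.R₂ := by
    rcases (e.flip h4).R₁_C_mem f h4 with h | h | h | h
    · exact absurd (h.trans hC.symm) h13.symm
    · exact absurd (h.trans (by rw [hR₁])) h23.symm
    · exact R₁_eq_of_R₁_C_eq (e := e.flip h4) (f := f.flip h4) h4 h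
    · exact (false_of_R₁_C_eq_R₁_D (e := e.flip h4) (f := f.flip h4) h4 h).elim
  ext1
  · rw [e.y_eq, f.y_eq, hR₁]
  · exact hR₁
  · exact hR₂

lemma intCount_R₂_y_sub (g : Decomp n ψ x z) :
    (g.R₂.intCount n g.y : ℤ) - g.R₂.intCount n x =
      ((fiberCard n (Ioo g.R₂.A g.R₂.B) g.R₁.A : ℤ) - fiberCard n (Ioo g.R₂.A g.R₂.B) g.R₁.B) *
        ((fiberCard n (Ioo g.R₂.C g.R₂.D) g.R₁.D : ℤ) -
          fiberCard n (Ioo g.R₂.C g.R₂.D) g.R₁.C) := by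
  have hy : g.y = x.trans (Equiv.swap (x g.R₁.A) (x g.R₁.B)) := by
    rw [apply_R₁_A, apply_R₁_B, y_eq]
  rw [hy, CRect.intCount_trans_swap_sub _ _ g.h₁.2.2.1, apply_R₁_A, apply_R₁_B]

lemma intCount_add_intCount (g : Decomp n ψ x z) (h4 : #{i | x i ≠ z i} = 4) :
    g.R₁.intCount n x + g.R₂.intCount n g.y =
      g.R₂.intCount n x + g.R₁.intCount n (g.flip h4).y := by
  have h₂ := g.intCount_R₂_y_sub
  have h₁ := (g.flip h4).intCount_R₂_y_sub
  simp only [flip_R₁, flip_R₂] at h₁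
  obtain ⟨hAB₁, hCD₁⟩ := CRect.lt_and_lt_of_isOrd_or_isLong g.h₁.2.1
  obtain ⟨hAB₂, hCD₂⟩ := CRect.lt_and_lt_of_isOrd_or_isLong g.h₂.2.1
  obtain ⟨-, hA, -, -, hB, -⟩ := List.nodup_four_iff.mp (g.cols_nodup h4)
  obtain ⟨-, hC, -, -, hD, -⟩ := List.nodup_four_iff.mp (g.rows_nodup h4)
  have hcol := fiberCard_Ioo_sub_fiberCard_Ioo hAB₁ hAB₂ hA hB
  have hrow := fiberCard_Ioo_sub_fiberCard_Ioo hCD₁ hCD₂ hC hD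
  zify
  linear_combination h₂ - h₁ -
    ((fiberCard n (Ioo g.R₂.C g.R₂.D) g.R₁.D : ℤ) - fiberCard n (Ioo g.R₂.C g.R₂.D) g.R₁.C) * hcol
    - ((fiberCard n (Ioo g.R₁.A g.R₁.B) g.R₂.A : ℤ) - fiberCard n (Ioo g.R₁.A g.R₁.B) g.R₂.B) * hrow

lemma intCount_R₂_y_of_isLong (g : Decomp n ψ x z) (h4 : #{i | x i ≠ z i} = 4)
    (hL : g.R₁.IsLong n) : g.R₂.intCount n g.y = g.R₂.intCount n x := by
  have h := g.intCount_R₂_y_sub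
  obtain ⟨hAB₂, hCD₂⟩ := CRect.lt_and_lt_of_isOrd_or_isLong g.h₂.2.1
  obtain ⟨-, hA, -, -, hB, -⟩ := List.nodup_four_iff.mp (g.cols_nodup h4)
  obtain ⟨-, hC, -, -, hD, -⟩ := List.nodup_four_iff.mp (g.rows_nodup h4)
  rcases hL.eq_add_one with hB₁ | hD₁
  · rw [hB₁, Int.cast_add, Int.cast_one] at hB h
    rw [fiberCard_Ioo_add_one hAB₂ hA.symm hB.symm, sub_self, zero_mul] at h
    omega
  · rw [hD₁, Int.cast_add, Int.cast_one] at hD h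
    rw [fiberCard_Ioo_add_one hCD₂ hC.symm hD.symm, sub_self, mul_zero] at h
    omega

lemma deg_flip (g : Decomp n ψ x z) (h4 : #{i | x i ≠ z i} = 4) :
    g.deg = (g.flip h4).deg := by
  show g.R₁.T n x + g.R₂.T n g.y = g.R₂.T n x + g.R₁.T n (g.flip h4).y
  by_cases h₁ : g.R₁.IsLong n <;> by_cases h₂ : g.R₂.IsLong n <;>
    simp only [CRect.T, h₁, h₂, if_true, if_false]
  · rw [g.intCount_R₂_y_of_isLong h4 h₁, add_comm]
  · exact (add_comm _ _).trans
      (congrArg (1 + ·) ((g.flip h4).intCount_R₂_y_of_isLong h4 h₂).symm)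
  · exact g.intCount_add_intCount h4

lemma ne_flip (g : Decomp n ψ x z) (h4 : #{i | x i ≠ z i} = 4) : g ≠ g.flip h4 := fun h =>
  (List.nodup_four_iff.mp (g.rows_nodup h4)).2.1 (congrArg (fun e => (e.R₁.C : ZMod n)) h)

end Decomp

/-- If `|x \ (x ∩ z)| = 4` and the domain `ψ ∈ π(x,z)` admits a decomposition into two
rectangles, not both long, then `ψ` admits precisely two such decompositions, and the
two decompositions have the same degree. -/
theorem stmt6 (n : ℕ) [NeZero n] (x z : Equiv.Perm (ZMod n))
    (ψ : ZMod n × ZMod n → ℤ)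
    (h4 : (Finset.univ.filter (fun i : ZMod n => x i ≠ z i)).card = 4)
    (d : Decomp n ψ x z) :
    ∃ d₁ d₂ : Decomp n ψ x z, d₁ ≠ d₂ ∧ (∀ e : Decomp n ψ x z, e = d₁ ∨ e = d₂) ∧
      d₁.deg = d₂.deg := by
  refine ⟨d, d.flip h4, d.ne_flip h4, fun e => ?_, d.deg_flip h4⟩
  rcases e.R₁_C_mem d h4 with h | h | h | h
  · exact .inl (Decomp.eq_of_R₁_C_eq h4 h)
  · exact (Decomp.false_of_R₁_C_eq_R₁_D h4 h).elim
  · exact .inr (Decomp.eq_of_R₁_C_eq (f := d.flip h4) h4 h)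
  · exact (Decomp.false_of_R₁_C_eq_R₁_D (f := d.flip h4) h4 h).elim
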